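/- Cauchy–Schwarz bound for absolute first moments of the multinomial: for every $x$ in the $d$-dimensional simplex, every $m \in \mathbb{N}$, and all $i,j$, $\sum_{k \in \mathbb{N}_0^d \cap m\mathcal{S}} |k_i/m - x_i|\,|k_j/m - x_j|\, P_{k,m}(x) \le \frac{1}{m}\sqrt{x_i(1-x_i)}\sqrt{x_j(1-x_j)} \le \frac{1}{4m}$. -/

import Mathlib

open MeasureTheory Finset

/-- The d-dimensional unit simplex. -/
def simplexSet (d : ℕ) : Set (Fin d → ℝ) :=
  {x | (∀ i, 0 ≤ x i ∧ x i ≤ 1) ∧ ∑ i, x i ≤ 1}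

/-- The lattice points of the discrete simplex `ℕ₀^d ∩ mS`. -/
def grid (d m : ℕ) : Finset (Fin d → ℕ) :=
  (Finset.Icc 0 (fun _ => m)).filter (fun k => ∑ i, k i ≤ m)

/-- Multinomial(m, x) probability mass at k. -/
noncomputable def Pw (d m : ℕ) (k : Fin d → ℕ) (x : Fin d → ℝ) : ℝ :=
  ((m.factorial : ℝ) / ((m - ∑ i, k i).factorial * ∏ i, (k i).factorial)) *
    (1 - ∑ i, x i) ^ (m - ∑ i, k i) * ∏ i, x i ^ k i

/-!
By Cauchy–Schwarz for the weights `Pw d m k x`, the mixed absolute moment is at most the geometric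
mean of the variances `∑ₖ (kᵢ/m - xᵢ)² Pw d m k x = xᵢ(1 - xᵢ)/m`, and `xᵢ(1 - xᵢ) ≤ 1/4`.
The variances come from the factorial moments, which are computed with the shift identity
`kᵢ Pw (m+1) k = (m+1) xᵢ Pw m (k - eᵢ)` and the multinomial theorem `∑ₖ Pw d m k x = 1`.
-/

open scoped Nat

lemma sum_add_single {ι : Type*} [Fintype ι] [DecidableEq ι] (k : ι → ℕ) (i : ι) :
    ∑ j, (k + Pi.single i 1 : ι → ℕ) j = ∑ j, k j + 1 := by
  simp [sum_add_distrib]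

lemma single_le_of_ne_zero {ι : Type*} [DecidableEq ι] {k : ι → ℕ} {i : ι} (hi : k i ≠ 0) :
    Pi.single i 1 ≤ k := by
  intro j
  by_cases hj : j = i
  · subst hj; simpa [Nat.one_le_iff_ne_zero]
  · simp [Pi.single_eq_of_ne hj]

lemma sum_mul_mul_le_sqrt_mul_sqrt {ι : Type*} (s : Finset ι) (a b w : ι → ℝ)
    (hw : ∀ k ∈ s, 0 ≤ w k) :
    ∑ k ∈ s, a k * b k * w k ≤ √(∑ k ∈ s, a k ^ 2 * w k) * √(∑ k ∈ s, b k ^ 2 * w k) := by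
  have hsq : ∀ c : ι → ℝ, ∑ k ∈ s, (c k * √(w k)) ^ 2 = ∑ k ∈ s, c k ^ 2 * w k :=
    fun c => sum_congr rfl fun k hk => by rw [mul_pow, Real.sq_sqrt (hw k hk)]
  calc ∑ k ∈ s, a k * b k * w k = ∑ k ∈ s, (a k * √(w k)) * (b k * √(w k)) :=
        sum_congr rfl fun k hk => by rw [mul_mul_mul_comm, Real.mul_self_sqrt (hw k hk)]
    _ ≤ √(∑ k ∈ s, a k ^ 2 * w k) * √(∑ k ∈ s, b k ^ 2 * w k) := by
        rw [← hsq a, ← hsq b]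
        exact Real.sum_mul_le_sqrt_mul_sqrt s _ _

lemma sqrt_mul_one_sub_le_half (a : ℝ) : √(a * (1 - a)) ≤ 1 / 2 := by
  rw [Real.sqrt_le_left (by norm_num)]
  nlinarith [sq_nonneg (a - 1 / 2)]

lemma mem_grid_iff {d m : ℕ} {k : Fin d → ℕ} : k ∈ grid d m ↔ ∑ i, k i ≤ m := by
  refine mem_filter.trans ⟨And.right, fun h => ⟨mem_Icc.2 ⟨fun _ => Nat.zero_le _, fun i => ?_⟩, h⟩⟩
  exact (single_le_sum (fun j _ => Nat.zero_le (k j)) (mem_univ i)).trans h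

lemma grid_zero (d : ℕ) : grid d 0 = {0} := by
  ext k
  simp [mem_grid_iff, funext_iff]

lemma Pw_nonneg {d m : ℕ} {x : Fin d → ℝ} (hx : x ∈ simplexSet d) (k : Fin d → ℕ) :
    0 ≤ Pw d m k x :=
  mul_nonneg (mul_nonneg (by positivity) (pow_nonneg (sub_nonneg.2 hx.2) _))
    (prod_nonneg fun i _ => pow_nonneg (hx.1 i).1 _)

/-- `Fin.cons` adjoins the cell of the `m - ∑ i, k i` remaining trials, whose probability is
`1 - ∑ i, x i`. -/
lemma Pw_eq_multinomial {d m : ℕ} {k : Fin d → ℕ} (x : Fin d → ℝ) (hk : ∑ i, k i ≤ m) :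
    Pw d m k x = Nat.multinomial univ (Fin.cons (m - ∑ i, k i) k : Fin (d + 1) → ℕ) *
      ∏ j, (Fin.cons (1 - ∑ i, x i) x : Fin (d + 1) → ℝ) j ^
        (Fin.cons (m - ∑ i, k i) k : Fin (d + 1) → ℕ) j := by
  have hspec := Nat.multinomial_spec univ (Fin.cons (m - ∑ i, k i) k : Fin (d + 1) → ℕ)
  simp only [Fin.sum_univ_succ, Fin.prod_univ_succ, Fin.cons_zero, Fin.cons_succ,
    Nat.sub_add_cancel hk] at hspec ⊢
  rw [Pw, ← hspec]
  push_cast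
  field_simp

theorem sum_Pw (d m : ℕ) (x : Fin d → ℝ) : ∑ k ∈ grid d m, Pw d m k x = 1 := by
  have h := sum_pow_eq_sum_piAntidiag univ (Fin.cons (1 - ∑ i, x i) x : Fin (d + 1) → ℝ) m
  simp only [Fin.sum_univ_succ, Fin.cons_zero, Fin.cons_succ, sub_add_cancel, one_pow] at h
  rw [h]
  refine sum_nbij' (fun k => (Fin.cons (m - ∑ i, k i) k : Fin (d + 1) → ℕ)) Fin.tail
    ?_ ?_ ?_ ?_ ?_
  · intro k hk
    simp [mem_piAntidiag, Fin.sum_univ_succ, Nat.sub_add_cancel (mem_grid_iff.1 hk)]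
  · intro K hK
    simp only [mem_piAntidiag, Fin.sum_univ_succ] at hK
    simp [mem_grid_iff, Fin.tail, ← hK.1]
  · intro k _
    simp
  · intro K hK
    simp only [mem_piAntidiag, Fin.sum_univ_succ] at hK
    simp only [Fin.tail, ← hK.1, Nat.add_sub_cancel, Fin.cons_self_tail]
  · intro k hk
    exact Pw_eq_multinomial x (mem_grid_iff.1 hk)

lemma natCast_succ_mul_Pw_add_single {d : ℕ} (m : ℕ) (k : Fin d → ℕ) (x : Fin d → ℝ)
    (i : Fin d) :
    ((k i : ℝ) + 1) * Pw d (m + 1) (k + Pi.single i 1) x = (m + 1) * x i * Pw d m k x := by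
  have hfact : ∏ j, ((k + Pi.single i 1 : Fin d → ℕ) j)! = (k i + 1) * ∏ j, (k j)! := by
    have hrest : ∏ j ∈ {i}ᶜ, ((k + Pi.single i 1 : Fin d → ℕ) j)! = ∏ j ∈ {i}ᶜ, (k j)! :=
      prod_congr rfl fun j hj => by simp [Pi.single_eq_of_ne (by simpa using hj : j ≠ i)]
    rw [Fintype.prod_eq_mul_prod_compl i, Fintype.prod_eq_mul_prod_compl i (fun j => (k j)!), hrest]
    simp [Nat.factorial_succ, mul_assoc]
  have hpow : ∏ j, x j ^ (k + Pi.single i 1 : Fin d → ℕ) j = x i * ∏ j, x j ^ k j := by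
    simp only [Pi.add_apply, pow_add, prod_mul_distrib]
    simp [Pi.single_apply, mul_comm]
  rw [Pw, Pw, sum_add_single, hfact, hpow, Nat.add_sub_add_right, Nat.factorial_succ]
  push_cast
  field_simp

lemma sum_natCast_mul_Pw_mul (d m : ℕ) (x : Fin d → ℝ) (i : Fin d) (F : (Fin d → ℕ) → ℝ) :
    ∑ k ∈ grid d (m + 1), (k i : ℝ) * Pw d (m + 1) k x * F k =
      (m + 1) * x i * ∑ k ∈ grid d m, Pw d m k x * F (k + Pi.single i 1) := by
  -- only the `k` with `k i ≠ 0` contribute, and these are the `k' + Pi.single i 1`, `k' ∈ grid d m`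
  rw [mul_sum, ← sum_filter_of_ne (p := fun k => k i ≠ 0) fun k _ hne h0 => hne (by simp [h0])]
  refine (sum_nbij' (· + Pi.single i 1) (· - Pi.single i 1) ?_ ?_ ?_ ?_ ?_).symm
  · intro k hk
    rw [mem_filter, mem_grid_iff, sum_add_single]
    exact ⟨Nat.add_le_add_right (mem_grid_iff.1 hk) 1, by simp⟩
  · intro k hk
    obtain ⟨hk, hi⟩ := mem_filter.1 hk
    rw [mem_grid_iff] at hk ⊢
    have := sum_add_single (k - Pi.single i 1) i
    rw [tsub_add_cancel_of_le (single_le_of_ne_zero hi)] at this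
    omega
  · intro k _
    exact add_tsub_cancel_right k _
  · intro k hk
    exact tsub_add_cancel_of_le (single_le_of_ne_zero (mem_filter.1 hk).2)
  · intro k _
    rw [← mul_assoc, ← natCast_succ_mul_Pw_add_single]
    simp

lemma sum_natCast_mul_Pw (d m : ℕ) (x : Fin d → ℝ) (i : Fin d) :
    ∑ k ∈ grid d m, (k i : ℝ) * Pw d m k x = m * x i := by
  cases m with
  | zero => simp [grid_zero]
  | succ n => simpa [sum_Pw] using sum_natCast_mul_Pw_mul d n x i fun _ => 1

lemma sum_natCast_mul_natCast_sub_one_mul_Pw (d m : ℕ) (x : Fin d → ℝ) (i : Fin d) :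
    ∑ k ∈ grid d m, (k i : ℝ) * (k i - 1) * Pw d m k x = m * (m - 1) * x i ^ 2 := by
  cases m with
  | zero => simp [grid_zero]
  | succ n =>
    have h := sum_natCast_mul_Pw_mul d n x i fun k => (k i : ℝ) - 1
    simp only [Pi.add_apply, Pi.single_eq_same, Nat.cast_add, Nat.cast_one, add_sub_cancel_right,
      mul_comm (Pw d n _ x), sum_natCast_mul_Pw] at h
    rw [sum_congr rfl fun k _ => mul_right_comm _ _ (Pw d (n + 1) k x), h]
    push_cast
    ring

theorem sum_sq_sub_mul_Pw (d m : ℕ) (x : Fin d → ℝ) (i : Fin d) :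
    ∑ k ∈ grid d m, ((k i : ℝ) - m * x i) ^ 2 * Pw d m k x = m * x i * (1 - x i) := by
  have expand : ∀ k : Fin d → ℕ, ((k i : ℝ) - m * x i) ^ 2 * Pw d m k x =
      (k i : ℝ) * (k i - 1) * Pw d m k x + (1 - 2 * m * x i) * ((k i : ℝ) * Pw d m k x) +
        (m * x i) ^ 2 * Pw d m k x := fun k => by ring
  simp only [expand, sum_add_distrib, ← mul_sum, sum_natCast_mul_natCast_sub_one_mul_Pw,
    sum_natCast_mul_Pw, sum_Pw]
  ring

theorem sum_sq_div_sub_mul_Pw (d : ℕ) {m : ℕ} (hm : m ≠ 0) (x : Fin d → ℝ) (i : Fin d) :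
    ∑ k ∈ grid d m, ((k i : ℝ) / m - x i) ^ 2 * Pw d m k x = x i * (1 - x i) / m := by
  have hm' : (m : ℝ) ≠ 0 := Nat.cast_ne_zero.2 hm
  have hscale : ∀ k : Fin d → ℕ, ((k i : ℝ) / m - x i) ^ 2 * Pw d m k x =
      ((k i : ℝ) - m * x i) ^ 2 * Pw d m k x / m ^ 2 := fun k => by field_simp
  rw [sum_congr rfl fun k _ => hscale k, ← sum_div, sum_sq_sub_mul_Pw]
  field_simp

/-- Cauchy–Schwarz bound for absolute mixed first moments of the multinomial. -/
theorem multinomial_abs_moment_bound (d m : ℕ) (hm : 0 < m) (x : Fin d → ℝ)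
    (hx : x ∈ simplexSet d) (i j : Fin d) :
    (∑ k ∈ grid d m, |(k i : ℝ) / m - x i| * |(k j : ℝ) / m - x j| * Pw d m k x ≤
      (1 / m) * Real.sqrt (x i * (1 - x i)) * Real.sqrt (x j * (1 - x j))) ∧
    (1 / m) * Real.sqrt (x i * (1 - x i)) * Real.sqrt (x j * (1 - x j)) ≤
      1 / (4 * m) := by
  have hm' : (0 : ℝ) < m := Nat.cast_pos.2 hm
  constructor
  · calc ∑ k ∈ grid d m, |(k i : ℝ) / m - x i| * |(k j : ℝ) / m - x j| * Pw d m k x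
          ≤ √(x i * (1 - x i) / m) * √(x j * (1 - x j) / m) := by
            simpa only [sq_abs, sum_sq_div_sub_mul_Pw d hm.ne'] using
              sum_mul_mul_le_sqrt_mul_sqrt (grid d m) (fun k => |(k i : ℝ) / m - x i|)
                (fun k => |(k j : ℝ) / m - x j|) (fun k => Pw d m k x) fun k _ => Pw_nonneg hx k
      _ = (1 / m) * √(x i * (1 - x i)) * √(x j * (1 - x j)) := by
            rw [Real.sqrt_div' _ hm'.le, Real.sqrt_div' _ hm'.le]
            field_simp
            rw [Real.sq_sqrt hm'.le]
            ring
  · calc (1 / m) * √(x i * (1 - x i)) * √(x j * (1 - x j)) ≤ (1 / m) * (1 / 2) * (1 / 2) := by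
          gcongr <;> exact sqrt_mul_one_sub_le_half _
      _ = 1 / (4 * m) := by ring
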